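/- arXiv:1501.05268 — 2 statements merged into one kernel-verified Lean document; each statement's English description precedes it below -/
import Mathlib

section
/- Theorem 2.5, part 1: Let X be a set and h_1,…,h_r : X → ℝ fixed functions. A function f : X → ℝ belongs to B(h_1,…,h_r;X) if and only if for every minimal closed path p = {x_1,…,x_n} ⊆ X with respect to h_1,…,h_r and every vector λ = (λ_1,…,λ_n) of nonzero reals making ⟨p,λ⟩ a closed path–vector pair, one has Σ_{j=1}^n λ_j f(x_j) = 0. -/
/-!
Weights `l : X →₀ ℝ` whose sums over all level sets of all `h i` vanish form the kernel of the
linear map `fiberSums h`; closed path–vector pairs are its nonzero elements, restricted to their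
supports, and minimal closed paths are the supports of its elementary vectors (nonzero elements
of minimal support). A function `f` lies in `B(h_1,…,h_r;X)` iff the functional
`l ↦ ∑ x, l x * f x` factors through `fiberSums h`, which over a field means that it vanishes on
that kernel. A functional vanishes on the whole kernel once it vanishes on its elementary
vectors: subtracting from `v` a multiple of an elementary vector supported inside `supp v` kills
one more coordinate, so induction on `#(supp v)` applies.
-/

open scoped Classical

/-- `⟨p, lam⟩` is a closed path–vector pair with respect to the functions `h i`:
`p` is a nonempty finite set of (distinct) points, the weights `lam` are nonzero on `p`,
and for every index `i` and every value `t`, the weights over the level set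
`{x ∈ p | h i x = t}` sum to zero. -/
def ClosedPathPair {α : Type*} {r : ℕ} (h : Fin r → α → ℝ)
    (p : Finset α) (lam : α → ℝ) : Prop :=
  p.Nonempty ∧ (∀ x ∈ p, lam x ≠ 0) ∧
    ∀ (i : Fin r) (t : ℝ), ∑ x ∈ p.filter (fun x => h i x = t), lam x = 0

/-- `p` is a closed path with respect to the functions `h i`. -/
def IsClosedPath {α : Type*} {r : ℕ} (h : Fin r → α → ℝ) (p : Finset α) : Prop :=
  ∃ lam : α → ℝ, ClosedPathPair h p lam

/-- `p` is a minimal closed path: it is a closed path and no proper subset of it is one. -/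
def IsMinimalClosedPath {α : Type*} {r : ℕ} (h : Fin r → α → ℝ) (p : Finset α) : Prop :=
  IsClosedPath h p ∧ ∀ q ⊂ p, ¬ IsClosedPath h q

namespace Finsupp

theorem mapDomain_apply_eq_sum_filter {α β N : Type*} [AddCommMonoid N] [DecidableEq β]
    {v : α →₀ N} {s : Finset α} (hs : v.support ⊆ s) (f : α → β) (b : β) :
    v.mapDomain f b = ∑ a ∈ s with f a = b, v a := by
  rw [mapDomain, sum_of_support_subset v hs _ (by simp), finsetSum_apply, Finset.sum_filter]
  simp [single_apply]

theorem linearCombination_indicator {K X : Type*} [Semiring K] (f : X → K) (p : Finset X)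
    (lam : X → K) :
    linearCombination K f (indicator p fun x _ => lam x) = ∑ x ∈ p, lam x * f x := by
  rw [linearCombination_apply_of_mem_supported K (s := p) (support_indicator_subset _ _)]
  exact Finset.sum_congr rfl fun x hx => by simp [indicator_of_mem hx]

end Finsupp

theorem LinearMap.exists_comp_eq_of_ker_le {K U V W : Type*} [Field K] [AddCommGroup U]
    [Module K U] [AddCommGroup V] [Module K V] [AddCommGroup W] [Module K W]
    (T : V →ₗ[K] W) (F : V →ₗ[K] U) (hTF : ker T ≤ ker F) :
    ∃ φ : W →ₗ[K] U, φ ∘ₗ T = F := by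
  obtain ⟨ψ, hψ⟩ := ((ker T).liftQ T le_rfl).exists_leftInverse_of_injective
    ((ker T).ker_liftQ_eq_bot T le_rfl le_rfl)
  refine ⟨(ker T).liftQ F hTF ∘ₗ ψ, ?_⟩
  calc (ker T).liftQ F hTF ∘ₗ ψ ∘ₗ T
      = (ker T).liftQ F hTF ∘ₗ (ψ ∘ₗ (ker T).liftQ T le_rfl) ∘ₗ (ker T).mkQ := by
        rw [comp_assoc, Submodule.liftQ_mkQ]
    _ = F := by rw [hψ, id_comp, Submodule.liftQ_mkQ]

section ElementaryVectors

variable {K X : Type*}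

def IsElementaryVector [Semiring K] (V : Submodule K (X →₀ K)) (w : X →₀ K) : Prop :=
  w ∈ V ∧ w ≠ 0 ∧ ∀ u ∈ V, u ≠ 0 → ¬ u.support ⊂ w.support

theorem exists_isElementaryVector_support_subset [Semiring K] {V : Submodule K (X →₀ K)}
    {v : X →₀ K} (hv : v ∈ V) (hv0 : v ≠ 0) :
    ∃ w, IsElementaryVector V w ∧ w.support ⊆ v.support := by
  obtain ⟨w, ⟨hwV, hw0, hwv⟩, hmin⟩ :=
    (measure fun u : X →₀ K => u.support.card).wf.has_min
      {u | u ∈ V ∧ u ≠ 0 ∧ u.support ⊆ v.support} ⟨v, hv, hv0, subset_rfl⟩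
  exact ⟨w, ⟨hwV, hw0, fun u huV hu0 huw =>
    hmin u ⟨huV, hu0, huw.subset.trans hwv⟩ (Finset.card_lt_card huw)⟩, hwv⟩

theorem le_ker_of_forall_isElementaryVector {M : Type*} [Field K] [AddCommGroup M] [Module K M]
    (V : Submodule K (X →₀ K)) (F : (X →₀ K) →ₗ[K] M)
    (hF : ∀ w, IsElementaryVector V w → F w = 0) : V ≤ LinearMap.ker F := by
  intro v hv
  induction hn : v.support.card using Nat.strong_induction_on generalizing v with
  | _ n ih =>
  rcases eq_or_ne v 0 with rfl | hv0
  · exact zero_mem _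
  obtain ⟨w, hw, hwv⟩ := exists_isElementaryVector_support_subset hv hv0
  obtain ⟨x, hx⟩ := Finsupp.support_nonempty_iff.2 hw.2.1
  set c := v x / w x
  have hv' : v - c • w ∈ V := sub_mem hv (V.smul_mem c hw.1)
  have hsupp : (v - c • w).support ⊂ v.support := by
    refine (Finset.ssubset_iff_of_subset ?_).2 ⟨x, hwv hx, ?_⟩
    · exact Finsupp.support_sub.trans
        (Finset.union_subset subset_rfl (Finsupp.support_smul.trans hwv))
    · simp [c, div_mul_cancel₀ _ (Finsupp.mem_support_iff.1 hx)]
  rw [LinearMap.mem_ker, ← sub_add_cancel v (c • w), map_add, map_smul, hF w hw, smul_zero,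
    add_zero, ← LinearMap.mem_ker]
  exact ih _ (hn ▸ Finset.card_lt_card hsupp) hv' rfl

end ElementaryVectors

section FiberSums

variable {K ι X Y : Type*} [Semiring K]

noncomputable def fiberSums (h : ι → X → Y) : (X →₀ K) →ₗ[K] ι → Y →₀ K :=
  LinearMap.pi fun i => Finsupp.lmapDomain K K (h i)

theorem fiberSums_single (h : ι → X → Y) (x : X) (c : K) :
    fiberSums h (Finsupp.single x c) = fun i => Finsupp.single (h i x) c := by
  ext i
  simp [fiberSums]

theorem mem_ker_fiberSums_iff [DecidableEq Y] (h : ι → X → Y) {l : X →₀ K} {s : Finset X}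
    (hs : l.support ⊆ s) :
    l ∈ LinearMap.ker (fiberSums h) ↔ ∀ i t, ∑ x ∈ s with h i x = t, l x = 0 := by
  simp [funext_iff, Finsupp.ext_iff, fiberSums, Finsupp.mapDomain_apply_eq_sum_filter hs]

end FiberSums

theorem exists_superposition_iff_ker_le {K ι X Y : Type*} [Field K] [Fintype ι]
    (h : ι → X → Y) (f : X → K) :
    (∃ g : ι → Y → K, ∀ x, f x = ∑ i, g i (h i x)) ↔
      LinearMap.ker (fiberSums h) ≤ LinearMap.ker (Finsupp.linearCombination K f) := by
  constructor
  · rintro ⟨g, hg⟩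
    have : (∑ i, Finsupp.linearCombination K (g i) ∘ₗ LinearMap.proj i) ∘ₗ fiberSums h =
        Finsupp.linearCombination K f := by
      ext x
      simp [fiberSums_single, hg]
    exact this ▸ LinearMap.ker_le_ker_comp _ _
  · intro hker
    obtain ⟨φ, hφ⟩ := LinearMap.exists_comp_eq_of_ker_le _ _ hker
    refine ⟨fun i t => φ (Pi.single i (Finsupp.single t 1)), fun x => ?_⟩
    calc f x = φ (fiberSums h (Finsupp.single x 1)) := by simp [← LinearMap.comp_apply, hφ]
      _ = φ (∑ i, Pi.single i (Finsupp.single (h i x) 1)) := by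
        rw [fiberSums_single, Finset.univ_sum_single]
      _ = _ := map_sum _ _ _

section ClosedPaths

variable {X : Type*} {r : ℕ} {h : Fin r → X → ℝ}

theorem ClosedPathPair.support_indicator {p : Finset X} {lam : X → ℝ}
    (hp : ClosedPathPair h p lam) : (Finsupp.indicator p fun x _ => lam x).support = p := by
  ext x
  by_cases hx : x ∈ p <;> simp [hx, hp.2.1]

theorem ClosedPathPair.indicator_mem_ker {p : Finset X} {lam : X → ℝ}
    (hp : ClosedPathPair h p lam) :
    (Finsupp.indicator p fun x _ => lam x) ∈ LinearMap.ker (fiberSums h) := by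
  rw [mem_ker_fiberSums_iff h (Finsupp.support_indicator_subset _ _)]
  intro i t
  rw [← hp.2.2 i t]
  exact Finset.sum_congr rfl fun x hx => Finsupp.indicator_of_mem (Finset.mem_filter.1 hx).1 _

theorem closedPathPair_support {l : X →₀ ℝ} (hl : l ∈ LinearMap.ker (fiberSums h))
    (hl0 : l ≠ 0) : ClosedPathPair h l.support l :=
  ⟨Finsupp.support_nonempty_iff.2 hl0, fun _ => Finsupp.mem_support_iff.1,
    (mem_ker_fiberSums_iff h subset_rfl).1 hl⟩

theorem IsElementaryVector.isMinimalClosedPath_support {w : X →₀ ℝ}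
    (hw : IsElementaryVector (LinearMap.ker (fiberSums h)) w) : IsMinimalClosedPath h w.support :=
  ⟨⟨w, closedPathPair_support hw.1 hw.2.1⟩, fun q hq ⟨lam, hlam⟩ => by
    have hsupp := hlam.support_indicator
    refine hw.2.2 _ hlam.indicator_mem_ker ?_ (by rwa [hsupp])
    rw [← Finsupp.support_nonempty_iff, hsupp]
    exact hlam.1⟩

end ClosedPaths

/-- Theorem 2.5, part 1: `f ∈ B(h_1,…,h_r;X)` iff `G_{p,λ}(f) = 0` for every minimal
closed path `p` and every vector `λ` making `⟨p,λ⟩` a closed path–vector pair. -/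
theorem mem_superpositions_iff_minimal_paths {X : Type*} {r : ℕ} (h : Fin r → X → ℝ)
    (f : X → ℝ) :
    (∃ g : Fin r → ℝ → ℝ, ∀ x, f x = ∑ i, g i (h i x)) ↔
      ∀ (p : Finset X) (lam : X → ℝ), IsMinimalClosedPath h p →
        ClosedPathPair h p lam → ∑ x ∈ p, lam x * f x = 0 := by
  rw [exists_superposition_iff_ker_le]
  constructor
  · intro hker p lam _ hpair
    rw [← Finsupp.linearCombination_indicator]
    exact hker hpair.indicator_mem_ker
  · intro H
    refine le_ker_of_forall_isElementaryVector _ _ fun w hw => ?_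
    rw [Finsupp.linearCombination_apply, Finsupp.sum]
    exact H _ _ hw.isMinimalClosedPath_support (closedPathPair_support hw.1 hw.2.1)
end

section
/- Let X be a set and h_1,…,h_r : X → ℝ fixed functions. If every bounded function f : X → ℝ can be written as f = Σ_{i=1}^r g_i ∘ h_i with bounded functions g_1,…,g_r : ℝ → ℝ, then every function f : X → ℝ can be written as f = Σ_{i=1}^r g_i ∘ h_i for some (arbitrary) functions g_1,…,g_r : ℝ → ℝ. -/
/-!
Send `x` to `e x = ∑ i, δ_(i, h i x)` in the free vector space on `ι × Y`. Evaluating a linear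
functional `Λ` at `e x` gives the superposition `∑ i, g i (h i x)` with `g i t = Λ δ_(i, t)`.
If the indicator of every point is a superposition, the vectors `e x` are linearly independent,
so any prescribed values `f x` on them extend to a linear functional, and `f` is a superposition.
Point indicators are bounded, so only those are needed from the hypothesis.
-/

open Finsupp

theorem LinearIndependent.exists_linearMap_apply_eq {K V W ι : Type*} [DivisionRing K]
    [AddCommGroup V] [Module K V] [AddCommGroup W] [Module K W] {v : ι → V}
    (hv : LinearIndependent K v) (f : ι → W) : ∃ L : V →ₗ[K] W, ∀ i, L (v i) = f i := by
  obtain ⟨L, hL⟩ := LinearMap.exists_extend (linearCombination K f ∘ₗ hv.repr)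
  refine ⟨L, fun i => ?_⟩
  have hvi : v i ∈ Submodule.span K (Set.range v) := Submodule.subset_span ⟨i, rfl⟩
  simpa [hv.repr_eq_single i ⟨v i, hvi⟩ rfl] using LinearMap.congr_fun hL ⟨v i, hvi⟩

section Superposition

variable (K : Type*) {ι X Y : Type*} [Fintype ι]

noncomputable def superpositionVector [Semiring K] (h : ι → X → Y) (x : X) : ι × Y →₀ K :=
  ∑ i, single (i, h i x) 1

variable {K}

theorem apply_superpositionVector [Semiring K] {M : Type*} [AddCommMonoid M] [Module K M]
    (L : (ι × Y →₀ K) →ₗ[K] M) (h : ι → X → Y) (x : X) :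
    L (superpositionVector K h x) = ∑ i, L (single (i, h i x) 1) :=
  map_sum L _ _

theorem linearIndependent_superpositionVector [Field K] [DecidableEq X] {h : ι → X → Y}
    (hδ : ∀ x₀ : X, ∃ g : ι → Y → K, ∀ x, (Pi.single x₀ 1 : X → K) x = ∑ i, g i (h i x)) :
    LinearIndependent K (superpositionVector K h) := by
  choose g hg using hδ
  let Λ : (ι × Y →₀ K) →ₗ[K] X → K :=
    LinearMap.pi fun x₀ => linearCombination K fun p => g x₀ p.1 p.2
  refine LinearIndependent.of_comp Λ ?_
  convert Pi.linearIndependent_single_one X K with x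
  funext x₀
  simp [Λ, apply_superpositionVector, Pi.single_comm x, hg]

theorem exists_superposition_of_forall_single [Field K] [DecidableEq X] {h : ι → X → Y}
    (hδ : ∀ x₀ : X, ∃ g : ι → Y → K, ∀ x, (Pi.single x₀ 1 : X → K) x = ∑ i, g i (h i x)) (f : X → K) :
    ∃ g : ι → Y → K, ∀ x, f x = ∑ i, g i (h i x) := by
  obtain ⟨L, hL⟩ := (linearIndependent_superpositionVector hδ).exists_linearMap_apply_eq f
  exact ⟨fun i t => L (single (i, t) 1), fun x => by rw [← hL, apply_superpositionVector]⟩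

end Superposition

/-- If every bounded function on `X` is a sum `Σ g_i ∘ h_i` with bounded `g_i`, then
every function on `X` is such a sum with arbitrary `g_i`. -/
theorem all_superpositions_of_bounded_superpositions
    {X : Type*} {r : ℕ} (h : Fin r → X → ℝ)
    (H : ∀ f : X → ℝ, (∃ C : ℝ, ∀ x, |f x| ≤ C) →
      ∃ g : Fin r → ℝ → ℝ, (∀ i, ∃ C : ℝ, ∀ t, |g i t| ≤ C) ∧ ∀ x, f x = ∑ i, g i (h i x)) :
    ∀ f : X → ℝ, ∃ g : Fin r → ℝ → ℝ, ∀ x, f x = ∑ i, g i (h i x) := by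
  classical
  refine exists_superposition_of_forall_single fun x₀ => ?_
  have hbounded : ∀ x, |(Pi.single x₀ 1 : X → ℝ) x| ≤ 1 := fun x => by
    rcases eq_or_ne x x₀ with rfl | hx <;> simp [*]
  obtain ⟨g, -, hg⟩ := H _ ⟨1, hbounded⟩
  exact ⟨g, hg⟩
end
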